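/- arXiv:0709.1436 — 3 statements merged into one kernel-verified Lean document; each statement's English description precedes it below -/
import Mathlib

section
/- Let n ≥ 1 and let g be holomorphic on the open unit ball B of ℂⁿ. If the extended Cesàro operator T_g is bounded on the Zygmund space Z, i.e. there exists C > 0 such that ‖T_g f‖ ≤ C‖f‖ for every f ∈ Z, then g belongs to Z, i.e. sup_{z∈B}(1-|z|²)|R(Rg)(z)| < ∞. -/
open MeasureTheory Metric Filter

noncomputable section

/-- `E n` is `ℂⁿ` with the Euclidean structure. -/
abbrev E (n : ℕ) := EuclideanSpace ℂ (Fin n)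

/-- The open unit ball of `ℂⁿ`. -/
def uball (n : ℕ) : Set (E n) := Metric.ball 0 1

/-- The radial derivative `Rf(z) = ∑ z_j ∂f/∂z_j(z)`. -/
def rad (n : ℕ) (f : E n → ℂ) (z : E n) : ℂ :=
  ∑ j : Fin n, z j * fderiv ℂ f z (EuclideanSpace.single j 1)

/-- The set of values `(1-|z|²)|R(Rf)(z)|`, `z ∈ B`. -/
def zygSet (n : ℕ) (f : E n → ℂ) : Set ℝ :=
  {x | ∃ z ∈ uball n, x = (1 - ‖z‖ ^ 2) * ‖rad n (rad n f) z‖}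

/-- Membership in the Zygmund space: `sup_{z∈B} (1-|z|²)|R(Rf)(z)| < ∞`. -/
def memZ (n : ℕ) (f : E n → ℂ) : Prop := BddAbove (zygSet n f)

/-- The Zygmund norm `‖f‖ = |f(0)| + sup_{z∈B} (1-|z|²)|R(Rf)(z)|`. -/
def zygNorm (n : ℕ) (f : E n → ℂ) : ℝ :=
  ‖f 0‖ + sSup (zygSet n f)

/-- The extended Cesàro operator `T_g f(z) = ∫₀¹ f(tz) Rg(tz) dt/t`. -/
def Tg (n : ℕ) (g f : E n → ℂ) (z : E n) : ℂ :=
  ∫ t in (0:ℝ)..1, f (t • z) * rad n g (t • z) / (t : ℂ)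

/-- The operator `I_g f(z) = ∫₀¹ Rf(tz) g(tz) dt/t`. -/
def Ig (n : ℕ) (g f : E n → ℂ) (z : E n) : ℂ :=
  ∫ t in (0:ℝ)..1, rad n f (t • z) * g (t • z) / (t : ℂ)

/-! Testing boundedness of `T_g` on the constant `1` suffices: `T_g 1 = g - g(0)` on the ball,
because `Rg(tz)/t` is the derivative of `t ↦ g(tz)`, and subtracting a constant does not change
`R(Rg)`. The fundamental theorem of calculus along `t ↦ g(tz)` is proved on the complex line
`w ↦ g(wz)`, where holomorphy gives the continuity of the derivative. -/

theorem integral_deriv_ofReal_eq_sub {φ : ℂ → ℂ} {S : Set ℂ} (hS : IsOpen S)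
    (hφ : DifferentiableOn ℂ φ S) (hI : ∀ t ∈ Set.Icc (0:ℝ) 1, (t : ℂ) ∈ S) :
    ∫ t in (0:ℝ)..1, deriv φ t = φ 1 - φ 0 := by
  rw [← Set.uIcc_of_le zero_le_one] at hI
  have hderiv : ∀ t ∈ Set.uIcc (0:ℝ) 1, HasDerivAt (fun s : ℝ => φ s) (deriv φ t) t :=
    fun t ht => ((hφ.differentiableAt (hS.mem_nhds (hI t ht))).hasDerivAt).comp_ofReal
  have hcont : ContinuousOn (fun t : ℝ => deriv φ t) (Set.uIcc 0 1) :=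
    ((hφ.analyticOnNhd hS).deriv.continuousOn).comp Complex.continuous_ofReal.continuousOn hI
  simpa using intervalIntegral.integral_eq_sub_of_hasDerivAt hderiv hcont.intervalIntegrable

theorem integral_fderiv_smul_eq_sub {F : Type*} [NormedAddCommGroup F] [NormedSpace ℂ F]
    {g : F → ℂ} {s : Set F} (hs : IsOpen s)
    (hg : DifferentiableOn ℂ g s) {z : F} (hz : ∀ t ∈ Set.Icc (0:ℝ) 1, (t : ℂ) • z ∈ s) :
    ∫ t in (0:ℝ)..1, fderiv ℂ g ((t : ℂ) • z) z = g z - g 0 := by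
  have hline : Differentiable ℂ fun w : ℂ => w • z := differentiable_id.smul_const z
  have hS : IsOpen ((· • z) ⁻¹' s) := hs.preimage hline.continuous
  have hderiv : ∀ w ∈ (· • z) ⁻¹' s, deriv (g ∘ (· • z)) w = fderiv ℂ g (w • z) z :=
    fun w hw => by
      simpa using ((hg.differentiableAt (hs.mem_nhds hw)).hasFDerivAt.comp_hasDerivAt w
        ((hasDerivAt_id (w : ℂ)).smul_const z)).deriv
  rw [intervalIntegral.integral_congr fun t ht => (hderiv t (hz t ?_)).symm,
    integral_deriv_ofReal_eq_sub hS (hg.comp hline.differentiableOn fun _ hw => hw) hz]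
  · simp
  · rwa [Set.uIcc_of_le zero_le_one] at ht

theorem rad_eq_fderiv (n : ℕ) (f : E n → ℂ) (z : E n) : rad n f z = fderiv ℂ f z z := by
  have hz := (EuclideanSpace.basisFun (Fin n) ℂ).toBasis.sum_repr z
  simp only [OrthonormalBasis.coe_toBasis_repr_apply, EuclideanSpace.basisFun_repr,
    OrthonormalBasis.coe_toBasis, EuclideanSpace.basisFun_apply] at hz
  conv_rhs => arg 2; rw [← hz]
  simp [rad, smul_eq_mul]

theorem rad_eqOn {n : ℕ} {f h : E n → ℂ} {s : Set (E n)} (hs : IsOpen s) (hfh : s.EqOn f h) :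
    s.EqOn (rad n f) (rad n h) := fun z hz => by
  have hfh' : f =ᶠ[nhds z] h := Filter.eventually_of_mem (hs.mem_nhds hz) hfh
  simp only [rad, hfh'.fderiv_eq]

theorem rad_sub_const (n : ℕ) (f : E n → ℂ) (c : ℂ) : rad n (fun z => f z - c) = rad n f := by
  ext z
  simp only [rad, fderiv_sub_const]

theorem rad_const (n : ℕ) (c : ℂ) : rad n (fun _ => c) = 0 := by
  ext z
  simp [rad]

theorem memZ_const (n : ℕ) (c : ℂ) : memZ n fun _ => c := by
  refine ⟨0, ?_⟩
  rintro x ⟨z, -, rfl⟩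
  simp [rad_const, rad]

theorem memZ_congr {n : ℕ} {f h : E n → ℂ} (hfh : (uball n).EqOn f h) : memZ n f ↔ memZ n h := by
  have hRR := rad_eqOn isOpen_ball (rad_eqOn isOpen_ball hfh)
  have hset : zygSet n f = zygSet n h := by
    ext x
    constructor <;> rintro ⟨z, hz, rfl⟩ <;> exact ⟨z, hz, by rw [hRR hz]⟩
  rw [memZ, memZ, hset]

theorem memZ_sub_const_iff {n : ℕ} {f : E n → ℂ} (c : ℂ) : memZ n (fun z => f z - c) ↔ memZ n f := by
  rw [memZ, memZ, zygSet, zygSet, rad_sub_const]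

theorem Tg_one_eqOn {n : ℕ} {g : E n → ℂ} (hg : DifferentiableOn ℂ g (uball n)) :
    (uball n).EqOn (Tg n g fun _ => 1) fun z => g z - g 0 := fun z hz => by
  show _ = g z - g 0
  have hseg : ∀ t ∈ Set.Icc (0:ℝ) 1, (t : ℂ) • z ∈ uball n := fun t ht => by
    rw [Complex.coe_smul]
    exact (convex_ball 0 1).smul_mem_of_zero_mem (mem_ball_self one_pos) hz ht
  rw [Tg, ← integral_fderiv_smul_eq_sub isOpen_ball hg hseg]
  refine intervalIntegral.integral_congr_ae (Eventually.of_forall fun t ht => ?_)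
  rw [Set.uIoc_of_le zero_le_one] at ht
  have ht0 : (t : ℂ) ≠ 0 := Complex.ofReal_ne_zero.mpr ht.1.ne'
  rw [one_mul, rad_eq_fderiv, ← Complex.coe_smul, map_smul, smul_eq_mul, mul_div_cancel_left₀ _ ht0]

theorem memZ_of_Tg_bounded_general (n : ℕ) (g : E n → ℂ)
    (hg : DifferentiableOn ℂ g (uball n))
    (hbdd : ∃ C > (0:ℝ), ∀ f : E n → ℂ, DifferentiableOn ℂ f (uball n) → memZ n f →
      memZ n (Tg n g f) ∧ zygNorm n (Tg n g f) ≤ C * zygNorm n f) :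
    memZ n g := by
  obtain ⟨C, -, hT⟩ := hbdd
  have hT1 : memZ n (Tg n g fun _ => 1) := (hT _ (differentiableOn_const 1) (memZ_const n 1)).1
  rwa [memZ_congr (Tg_one_eqOn hg), memZ_sub_const_iff] at hT1

/-- **Theorem 1, (a) ⇒ (c).** If the extended Cesàro operator `T_g` is bounded on the
Zygmund space, then `g ∈ 𝒵`. -/
theorem memZ_of_Tg_bounded (n : ℕ) (hn : 1 ≤ n) (g : E n → ℂ)
    (hg : DifferentiableOn ℂ g (uball n))
    (hbdd : ∃ C > (0:ℝ), ∀ f : E n → ℂ, DifferentiableOn ℂ f (uball n) → memZ n f →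
      memZ n (Tg n g f) ∧ zygNorm n (Tg n g f) ≤ C * zygNorm n f) :
    memZ n g :=
  memZ_of_Tg_bounded_general n g hg hbdd
end
end

section
/- Let n ≥ 1 and let g be holomorphic on the open unit ball B of ℂⁿ. If g is bounded on B and g belongs to the weighted Bloch space B_log, i.e. sup_{z∈B}(1-|z|²)|Rg(z)|·log(2/(1-|z|²)) < ∞, then the operator I_g is bounded on the Zygmund space Z: there exists C > 0 such that ‖I_g f‖ ≤ C‖f‖ for every f ∈ Z. -/
open MeasureTheory Metric Filter

noncomputable section

/-!
Since `R (I_g f) = Rf · g`, one more radial derivative gives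
`R (R (I_g f)) = R(Rf) · g + Rf · Rg`. The first term is bounded by `‖g‖_∞` times the Zygmund
seminorm `M` of `f`. For the second, restrict `Rf` to a complex line through the origin: the
resulting one-variable function `φ` satisfies `(1 - |λ|²) |λ φ'(λ)| ≤ M`, hence
`|φ'(t)| ≤ 3M / (1 - t)` on `[0, 1)` (by the maximum principle near `0`), and integrating gives
`|Rf(z)| ≤ 3M log (2 / (1 - |z|²))`. This logarithm is exactly what the `B_log` condition on `g`
absorbs.

That `Rf` and `I_g f` are holomorphic comes from Cauchy's formula: along a complex line,
`∂f/∂v` is a circle integral of translates of `f`, which can be differentiated under the integral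
sign thanks to the Cauchy estimates.
-/

open Complex Real Topology

section CauchyEstimates

variable {E F : Type*} [NormedAddCommGroup E] [NormedSpace ℂ E]
  [NormedAddCommGroup F] [NormedSpace ℂ F]

theorem HasFDerivAt.hasDerivAt_add_smul {f : E → F} {f' : E →L[ℂ] F} {y u : E} {c : ℂ}
    (hf : HasFDerivAt f f' (y + c • u)) : HasDerivAt (fun c : ℂ => f (y + c • u)) (f' u) c := by
  have := hf.comp_hasDerivAt c (((hasDerivAt_id c).smul_const u).const_add y)
  simpa [Function.comp_def] using this

theorem DifferentiableAt.deriv_add_smul_zero {f : E → F} {y : E} (hf : DifferentiableAt ℂ f y)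
    (u : E) : deriv (fun c : ℂ => f (y + c • u)) 0 = fderiv ℂ f y u := by
  have hy : DifferentiableAt ℂ f (y + (0 : ℂ) • u) := by simpa using hf
  simpa using hy.hasFDerivAt.hasDerivAt_add_smul.deriv

theorem norm_fderiv_le_of_forall_mem_closedBall_norm_le {f : E → F} {y : E} {s M : ℝ}
    (hs : 0 < s) (hf : ∀ w ∈ closedBall y s, DifferentiableAt ℂ f w)
    (hM : ∀ w ∈ closedBall y s, ‖f w‖ ≤ M) : ‖fderiv ℂ f y‖ ≤ M / s := by
  have hM0 : 0 ≤ M := (norm_nonneg _).trans (hM y (mem_closedBall_self hs.le))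
  refine ContinuousLinearMap.opNorm_le_bound _ (by positivity) fun u => ?_
  rcases eq_or_ne u 0 with rfl | hu
  · simp
  have hu0 : 0 < ‖u‖ := norm_pos_iff.2 hu
  have hline : ∀ c ∈ closedBall (0 : ℂ) (s / ‖u‖), y + c • u ∈ closedBall y s := by
    intro c hc
    rw [mem_closedBall_zero_iff] at hc
    rw [mem_closedBall, dist_self_add_left, norm_smul]
    exact (le_div_iff₀ hu0).1 hc
  have hd : DifferentiableOn ℂ (fun c : ℂ => f (y + c • u)) (closedBall 0 (s / ‖u‖)) :=
    fun c hc => ((hf _ (hline c hc)).hasFDerivAt.hasDerivAt_add_smul).differentiableAt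
      |>.differentiableWithinAt
  calc ‖fderiv ℂ f y u‖ = ‖deriv (fun c : ℂ => f (y + c • u)) 0‖ := by
        rw [(hf y (mem_closedBall_self hs.le)).deriv_add_smul_zero]
    _ ≤ M / (s / ‖u‖) :=
        norm_deriv_le_of_forall_mem_sphere_norm_le (by positivity)
          (hd.mono closure_ball_subset_closedBall).diffContOnCl
          fun c hc => hM _ (hline c (sphere_subset_closedBall hc))
    _ = M / s * ‖u‖ := by field_simp

theorem fderiv_apply_eq_circleIntegral [CompleteSpace F] {f : E → F} {x v : E} {r : ℝ}
    (hr : 0 < r) (hf : ∀ c ∈ closedBall (0 : ℂ) r, DifferentiableAt ℂ f (x + c • v)) :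
    fderiv ℂ f x v = (2 * π * I)⁻¹ • ∮ c in C(0, r), (1 / c ^ 2) • f (x + c • v) := by
  have hd : DifferentiableOn ℂ (fun c : ℂ => f (x + c • v)) (closedBall 0 r) :=
    fun c hc => (hf c hc).hasFDerivAt.hasDerivAt_add_smul.differentiableAt.differentiableWithinAt
  have hx : DifferentiableAt ℂ f x := by simpa using hf 0 (mem_closedBall_self hr.le)
  have := hd.deriv_eq_smul_circleIntegral hr
  simp only [sub_zero] at this
  rw [this, hx.deriv_add_smul_zero, smul_smul, inv_mul_cancel₀ two_pi_I_ne_zero, one_smul]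

end CauchyEstimates

section Holomorphy
variable {E : Type*} [NormedAddCommGroup E] [NormedSpace ℂ E] [FiniteDimensional ℂ E]

theorem hasFDerivAt_circleIntegral_smul_comp_add_smul {f : E → ℂ} {k : ℂ → ℂ} {z₀ v : E}
    {r s B : ℝ} (hr : 0 ≤ r) (hk : ContinuousOn k (sphere 0 r)) (hs : 0 < s)
    (hf : ∀ x ∈ ball z₀ s, ∀ c ∈ sphere (0 : ℂ) r, DifferentiableAt ℂ f (x + c • v))
    (hB : ∀ x ∈ ball z₀ s, ∀ c ∈ sphere (0 : ℂ) r, ‖fderiv ℂ f (x + c • v)‖ ≤ B) :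
    HasFDerivAt (fun x => ∮ c in C(0, r), k c • f (x + c • v))
      (∮ c in C(0, r), k c • fderiv ℂ f (z₀ + c • v)) z₀ := by
  borelize E
  obtain ⟨K, hK⟩ := (isCompact_sphere (0 : ℂ) r).exists_bound_of_continuousOn hk
  have hγ := circleMap_mem_sphere (0 : ℂ) hr
  have hdγ : Continuous fun θ => circleMap 0 r θ * I :=
    (continuous_circleMap 0 r).mul continuous_const
  have hkγ : Continuous fun θ => k (circleMap 0 r θ) :=
    hk.comp_continuous (continuous_circleMap 0 r) hγ
  have hcont : ∀ x ∈ ball z₀ s, Continuous fun θ => f (x + circleMap 0 r θ • v) := fun x hx =>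
    continuous_iff_continuousAt.2 fun θ =>
      (hf x hx _ (hγ θ)).continuousAt.comp (x := θ)
        (by fun_prop : Continuous fun θ => x + circleMap 0 r θ • v).continuousAt
  simp only [circleIntegral, deriv_circleMap]
  refine intervalIntegral.hasFDerivAt_integral_of_dominated_of_fderiv_le
    (μ := volume)
    (F := fun x θ => (circleMap 0 r θ * I) • k (circleMap 0 r θ) • f (x + circleMap 0 r θ • v))
    (F' := fun x θ =>
      (circleMap 0 r θ * I) • k (circleMap 0 r θ) • fderiv ℂ f (x + circleMap 0 r θ • v))
    (bound := fun _ => r * K * B) (ball_mem_nhds z₀ hs) ?_ ?_ ?_ ?_ intervalIntegrable_const ?_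
  · filter_upwards [ball_mem_nhds z₀ hs] with x hx
    exact (hdγ.smul (hkγ.smul (hcont x hx))).aestronglyMeasurable
  · exact (hdγ.smul (hkγ.smul (hcont z₀ (mem_ball_self hs)))).intervalIntegrable _ _
  · exact hdγ.aestronglyMeasurable.smul
      (hkγ.aestronglyMeasurable.smul ((measurable_fderiv ℂ f).comp (by fun_prop : Continuous
        fun θ => z₀ + circleMap 0 r θ • v).measurable).aestronglyMeasurable)
  · refine .of_forall fun θ _ x hx => ?_
    rw [norm_smul, norm_smul, norm_mul, norm_circleMap_zero, abs_of_nonneg hr, norm_I, mul_one,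
      mul_assoc]
    gcongr
    · exact (norm_nonneg _).trans (hK _ (hγ 0))
    · exact hK _ (hγ θ)
    · exact hB x hx _ (hγ θ)
  · refine .of_forall fun θ _ x hx => ?_
    have h := (hf x hx _ (hγ θ)).hasFDerivAt.comp x
      ((hasFDerivAt_id x).add_const (circleMap 0 r θ • v))
    rw [ContinuousLinearMap.comp_id] at h
    exact (h.const_smul (k (circleMap 0 r θ))).const_smul (circleMap 0 r θ * I)

theorem exists_forall_mem_closedBall_norm_fderiv_le {f : E → ℂ} {z₀ : E} {a δ : ℝ} (hδ : 0 < δ)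
    (hf : ∀ w ∈ closedBall z₀ (a + δ), DifferentiableAt ℂ f w) :
    ∃ B, ∀ w ∈ closedBall z₀ a, ‖fderiv ℂ f w‖ ≤ B := by
  obtain ⟨M, hM⟩ := (isCompact_closedBall z₀ (a + δ)).exists_bound_of_continuousOn
    fun w hw => (hf w hw).continuousAt.continuousWithinAt
  have hsub : ∀ w ∈ closedBall z₀ a, closedBall w δ ⊆ closedBall z₀ (a + δ) := fun w hw =>
    closedBall_subset_closedBall' (by rw [mem_closedBall] at hw; linarith)
  exact ⟨M / δ, fun w hw => norm_fderiv_le_of_forall_mem_closedBall_norm_le hδ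
    (fun y hy => hf y (hsub w hw hy)) fun y hy => hM y (hsub w hw hy)⟩

theorem differentiableAt_fderiv_apply_of_forall_mem_closedBall {f : E → ℂ} {z₀ : E} {ε : ℝ}
    (hε : 0 < ε) (hf : ∀ w ∈ closedBall z₀ ε, DifferentiableAt ℂ f w) (v : E) :
    DifferentiableAt ℂ (fun z => fderiv ℂ f z v) z₀ := by
  set δ := ε / 3 with hδ
  set r := δ / (‖v‖ + 1) with hr
  have hδ0 : 0 < δ := by positivity
  have hr0 : 0 < r := by positivity
  obtain ⟨B, hB⟩ := exists_forall_mem_closedBall_norm_fderiv_le (a := 2 * δ) hδ0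
    (by rwa [show 2 * δ + δ = ε by rw [hδ]; ring])
  have hnear : ∀ x ∈ closedBall z₀ δ, ∀ c ∈ closedBall (0 : ℂ) r,
      x + c • v ∈ closedBall z₀ (2 * δ) := by
    intro x hx c hc
    have hcv : ‖c • v‖ ≤ δ := by
      rw [norm_smul]
      calc ‖c‖ * ‖v‖ ≤ r * (‖v‖ + 1) := by gcongr <;> linarith [mem_closedBall_zero_iff.1 hc]
        _ = δ := by rw [hr]; field_simp
    rw [mem_closedBall] at hx ⊢
    have h1 : dist (x + c • v) x = ‖c • v‖ := dist_self_add_left _ _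
    linarith [dist_triangle (x + c • v) x z₀]
  have hball : ∀ x ∈ closedBall z₀ δ, ∀ c ∈ closedBall (0 : ℂ) r,
      DifferentiableAt ℂ f (x + c • v) := fun x hx c hc =>
    hf _ (closedBall_subset_closedBall (by linarith) (hnear x hx c hc))
  have hrep : (fun z => fderiv ℂ f z v) =ᶠ[𝓝 z₀]
      fun x => (2 * π * I)⁻¹ • ∮ c in C(0, r), (1 / c ^ 2) • f (x + c • v) := by
    filter_upwards [closedBall_mem_nhds z₀ hδ0] with x hx
    exact fderiv_apply_eq_circleIntegral hr0 (hball x hx)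
  have hI := hasFDerivAt_circleIntegral_smul_comp_add_smul (k := fun c => 1 / c ^ 2) hr0.le
    ((continuousOn_const.div (continuousOn_id.pow 2)) fun c hc =>
      pow_ne_zero 2 (ne_of_mem_sphere hc hr0.ne')) hδ0
    (fun x hx c hc => hball x (ball_subset_closedBall hx) c (sphere_subset_closedBall hc))
    fun x hx c hc => hB _ (hnear x (ball_subset_closedBall hx) c (sphere_subset_closedBall hc))
  exact (hI.const_smul ((2 * π * I)⁻¹ : ℂ)).differentiableAt.congr_of_eventuallyEq hrep

theorem DifferentiableOn.differentiableOn_fderiv_apply {f : E → ℂ} {U : Set E} (hU : IsOpen U)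
    (hf : DifferentiableOn ℂ f U) (v : E) : DifferentiableOn ℂ (fun z => fderiv ℂ f z v) U := by
  intro z₀ hz₀
  obtain ⟨ε, hε, hεU⟩ := nhds_basis_closedBall.mem_iff.1 (hU.mem_nhds hz₀)
  exact (differentiableAt_fderiv_apply_of_forall_mem_closedBall hε (fun w hw =>
    hf.differentiableAt (hU.mem_nhds (hεU hw))) v).differentiableWithinAt

theorem DifferentiableOn.continuousOn_fderiv {f : E → ℂ} {U : Set E} (hU : IsOpen U)
    (hf : DifferentiableOn ℂ f U) : ContinuousOn (fderiv ℂ f) U :=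
  continuousOn_clm_apply.2 fun v => (hf.differentiableOn_fderiv_apply hU v).continuousOn

end Holomorphy

section RadialIntegral
variable {E : Type*} [NormedAddCommGroup E] [NormedSpace ℂ E] {h : E → ℂ} {R : ℝ}

theorem smul_mem_ball_zero {z : E} {t : ℝ} (hz : z ∈ ball (0 : E) R) (ht : t ∈ Set.Icc 0 1) :
    t • z ∈ ball (0 : E) R :=
  (convex_ball (0 : E) R).starConvex (mem_ball_self ((norm_nonneg z).trans_lt
    (mem_ball_zero_iff.1 hz))) |>.smul_mem hz ht.1 ht.2

theorem HasFDerivAt.comp_smul_div {t : ℝ} (ht : t ≠ 0) {x : E} {h' : E →L[ℂ] ℂ}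
    (hh : HasFDerivAt h h' (t • x)) : HasFDerivAt (fun x => h (t • x) / t) h' x := by
  have hd := (hh.comp x ((hasFDerivAt_id x).const_smul t)).const_mul ((t : ℂ)⁻¹)
  simp only [Function.comp_def, ← div_eq_inv_mul] at hd
  refine hd.congr_fderiv ?_
  ext v
  simp [ht]

theorem continuousOn_comp_smul_div (hh : ContinuousOn h (ball 0 1)) {z : E}
    (hz : z ∈ ball (0 : E) 1) : ContinuousOn (fun t : ℝ => h (t • z) / t) (Set.Ioc 0 1) :=
  (hh.comp (by fun_prop) fun t ht => smul_mem_ball_zero hz (Set.Ioc_subset_Icc_self ht)).div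
    (by fun_prop) fun t ht => by simpa using ht.1.ne'

variable [FiniteDimensional ℂ E]

theorem integral_fderiv_smul_apply_eq_sub (hh : DifferentiableOn ℂ h (ball 0 R)) {z : E}
    (hz : z ∈ ball (0 : E) R) : ∫ t in (0 : ℝ)..1, fderiv ℂ h (t • z) z = h z - h 0 := by
  have hcont : ContinuousOn (fun t : ℝ => fderiv ℂ h (t • z)) (Set.Icc 0 1) :=
    (hh.continuousOn_fderiv isOpen_ball).comp (by fun_prop) fun t ht => smul_mem_ball_zero hz ht
  rw [intervalIntegral.integral_eq_sub_of_hasDerivAt (f := fun t : ℝ => h (t • z))]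
  · simp
  · intro t ht
    rw [Set.uIcc_of_le zero_le_one] at ht
    have hd := (hh.differentiableAt (isOpen_ball.mem_nhds (smul_mem_ball_zero hz ht))).hasFDerivAt
    simpa [Function.comp_def] using
      (hd.restrictScalars ℝ).comp_hasDerivAt t ((hasDerivAt_id t).smul_const z)
  · exact (ContinuousLinearMap.apply ℂ ℂ z).continuous.comp_continuousOn hcont
      |>.intervalIntegrable_of_Icc zero_le_one

theorem intervalIntegrable_comp_smul_div (hh : DifferentiableOn ℂ h (ball 0 1)) (h0 : h 0 = 0)
    {z : E} (hz : z ∈ ball (0 : E) 1) :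
    IntervalIntegrable (fun t : ℝ => h (t • z) / t) volume 0 1 := by
  have hK : closedBall (0 : E) ‖z‖ ⊆ ball 0 1 := closedBall_subset_ball (mem_ball_zero_iff.1 hz)
  obtain ⟨B, hB⟩ := (isCompact_closedBall (0 : E) ‖z‖).exists_bound_of_continuousOn
    ((hh.continuousOn_fderiv isOpen_ball).mono hK)
  refine intervalIntegrable_const (c := B * ‖z‖) |>.mono_fun' ?_ ?_ <;>
    rw [Set.uIoc_of_le zero_le_one]
  · exact (continuousOn_comp_smul_div hh.continuousOn hz).aestronglyMeasurable measurableSet_Ioc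
  refine (ae_restrict_iff' measurableSet_Ioc).2 (.of_forall fun t ht => ?_)
  have htz : ‖t • z‖ = t * ‖z‖ := by rw [norm_smul, Real.norm_of_nonneg ht.1.le]
  have hmvt := (convex_closedBall (0 : E) ‖z‖).norm_image_sub_le_of_norm_fderiv_le
    (fun w hw => hh.differentiableAt (isOpen_ball.mem_nhds (hK hw))) hB
    (mem_closedBall_self (norm_nonneg z))
    (mem_closedBall_zero_iff.2 (htz.trans_le (mul_le_of_le_one_left (norm_nonneg z) ht.2)))
  rw [h0, sub_zero, sub_zero, htz] at hmvt
  simp only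
  rw [norm_div, Complex.norm_real, Real.norm_of_nonneg ht.1.le, div_le_iff₀ ht.1]
  linarith

/-- The factor `t` produced by the chain rule cancels the `1 / t`, so the derivatives of the
integrand stay bounded near `t = 0`. -/
theorem hasFDerivAt_integral_comp_smul_div (hh : DifferentiableOn ℂ h (ball 0 1)) (h0 : h 0 = 0)
    {z : E} (hz : z ∈ ball (0 : E) 1) :
    HasFDerivAt (fun x => ∫ t in (0 : ℝ)..1, h (t • x) / t)
      (∫ t in (0 : ℝ)..1, fderiv ℂ h (t • z)) z := by
  set ρ := (‖z‖ + 1) / 2 with hρ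
  have hzρ : ‖z‖ < ρ := by linarith [mem_ball_zero_iff.1 hz]
  have hρU : closedBall (0 : E) ρ ⊆ ball 0 1 := closedBall_subset_ball (by linarith)
  have hnhds : ball z (ρ - ‖z‖) ⊆ closedBall (0 : E) ρ := fun x hx => by
    rw [mem_ball, dist_eq_norm] at hx
    rw [mem_closedBall_zero_iff]
    linarith [norm_le_norm_add_norm_sub' x z, norm_sub_rev x z]
  have hsmul : ∀ x ∈ closedBall (0 : E) ρ, ∀ t ∈ Set.Icc (0 : ℝ) 1, t • x ∈ closedBall (0 : E) ρ :=
    fun x hx t ht => (convex_closedBall (0 : E) ρ).starConvex (mem_closedBall_self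
      ((norm_nonneg x).trans (mem_closedBall_zero_iff.1 hx))) |>.smul_mem hx ht.1 ht.2
  obtain ⟨B, hB⟩ := (isCompact_closedBall (0 : E) ρ).exists_bound_of_continuousOn
    ((hh.continuousOn_fderiv isOpen_ball).mono hρU)
  have hIoc : Set.uIoc (0 : ℝ) 1 = Set.Ioc 0 1 := Set.uIoc_of_le zero_le_one
  refine intervalIntegral.hasFDerivAt_integral_of_dominated_of_fderiv_le (μ := volume)
    (F := fun x t => h (t • x) / t) (F' := fun x t => fderiv ℂ h (t • x)) (bound := fun _ => B)
    (ball_mem_nhds z (sub_pos.2 hzρ)) ?_ (intervalIntegrable_comp_smul_div hh h0 hz) ?_ ?_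
    intervalIntegrable_const ?_ <;> try rw [hIoc]
  · filter_upwards [ball_mem_nhds z (sub_pos.2 hzρ)] with x hx
    exact (continuousOn_comp_smul_div hh.continuousOn (hρU (hnhds hx))).aestronglyMeasurable
      measurableSet_Ioc
  · exact (((hh.continuousOn_fderiv isOpen_ball).comp (by fun_prop) fun t ht =>
      smul_mem_ball_zero hz ht).mono Set.Ioc_subset_Icc_self).aestronglyMeasurable measurableSet_Ioc
  · refine .of_forall fun t ht x hx => ?_
    exact hB _ (hsmul x (hnhds hx) t (Set.Ioc_subset_Icc_self ht))
  · refine .of_forall fun t ht x hx => ?_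
    exact (hh.differentiableAt (isOpen_ball.mem_nhds (hρU (hsmul x (hnhds hx) t
      (Set.Ioc_subset_Icc_self ht))))).hasFDerivAt.comp_smul_div ht.1.ne'

theorem fderiv_integral_comp_smul_div_apply_self (hh : DifferentiableOn ℂ h (ball 0 1))
    (h0 : h 0 = 0) {z : E} (hz : z ∈ ball (0 : E) 1) :
    fderiv ℂ (fun x => ∫ t in (0 : ℝ)..1, h (t • x) / t) z z = h z := by
  rw [(hasFDerivAt_integral_comp_smul_div hh h0 hz).fderiv,
    ContinuousLinearMap.intervalIntegral_apply, integral_fderiv_smul_apply_eq_sub hh hz, h0,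
    sub_zero]
  exact ((hh.continuousOn_fderiv isOpen_ball).comp (by fun_prop) fun t ht =>
    smul_mem_ball_zero hz ht).intervalIntegrable_of_Icc zero_le_one

end RadialIntegral

section LogGrowth
variable {F : Type*} [NormedAddCommGroup F] [NormedSpace ℂ F] [CompleteSpace F]
  {φ : ℂ → F} {M : ℝ}

theorem norm_deriv_le_of_mem_closedBall_half (hφ : DifferentiableOn ℂ φ (ball 0 1))
    (hM : ∀ c ∈ ball (0 : ℂ) 1, (1 - ‖c‖ ^ 2) * ‖c • deriv φ c‖ ≤ M) {c : ℂ}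
    (hc : c ∈ closedBall (0 : ℂ) (1 / 2)) : ‖deriv φ c‖ ≤ 8 / 3 * M := by
  have hd : DiffContOnCl ℂ (deriv φ) (ball (0 : ℂ) (1 / 2)) := by
    refine DifferentiableOn.diffContOnCl ?_
    rw [closure_ball _ (by norm_num)]
    exact (hφ.deriv isOpen_ball).mono (closedBall_subset_ball (by norm_num))
  refine Complex.norm_le_of_forall_mem_frontier_norm_le isBounded_ball hd (fun w hw => ?_)
    (by rwa [closure_ball _ (by norm_num)])
  rw [frontier_ball _ (by norm_num), mem_sphere_zero_iff_norm] at hw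
  have := hM w (mem_ball_zero_iff.2 (by rw [hw]; norm_num))
  rw [norm_smul, hw] at this
  linarith

theorem norm_deriv_ofReal_le_div_one_sub (hφ : DifferentiableOn ℂ φ (ball 0 1))
    (hM : ∀ c ∈ ball (0 : ℂ) 1, (1 - ‖c‖ ^ 2) * ‖c • deriv φ c‖ ≤ M) {t : ℝ} (ht0 : 0 ≤ t)
    (ht1 : t < 1) : ‖deriv φ t‖ ≤ 3 * M / (1 - t) := by
  have hM0 : 0 ≤ M := by simpa using hM 0 (mem_ball_self one_pos)
  rw [le_div_iff₀ (by linarith)]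
  rcases le_or_gt t (1 / 2) with ht | ht
  · have := norm_deriv_le_of_mem_closedBall_half hφ hM (c := t) (by
      rw [mem_closedBall_zero_iff, Complex.norm_real, Real.norm_of_nonneg ht0]; exact ht)
    nlinarith [norm_nonneg (deriv φ t)]
  · have := hM t (by rw [mem_ball_zero_iff, Complex.norm_real, Real.norm_of_nonneg ht0]; exact ht1)
    rw [norm_smul, Complex.norm_real, Real.norm_of_nonneg ht0] at this
    nlinarith [norm_nonneg (deriv φ t), mul_nonneg (mul_nonneg ht0 (norm_nonneg (deriv φ t)))
      (sub_nonneg.2 ht1.le)]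

theorem norm_sub_le_mul_log_of_smul_deriv_le (hφ : DifferentiableOn ℂ φ (ball 0 1))
    (hM : ∀ c ∈ ball (0 : ℂ) 1, (1 - ‖c‖ ^ 2) * ‖c • deriv φ c‖ ≤ M) {r : ℝ} (hr0 : 0 ≤ r)
    (hr1 : r < 1) : ‖φ r - φ 0‖ ≤ 3 * M * Real.log (2 / (1 - r ^ 2)) := by
  have hM0 : 0 ≤ M := by simpa using hM 0 (mem_ball_self one_pos)
  have hmem : ∀ t ∈ Set.Icc 0 r, (t : ℂ) ∈ ball (0 : ℂ) 1 := fun t ht => by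
    rw [mem_ball_zero_iff, Complex.norm_real, Real.norm_of_nonneg ht.1]; linarith [ht.2]
  have hφt : ∀ t ∈ Set.Icc 0 r, HasDerivAt (fun t : ℝ => φ t - φ 0) (deriv φ t) t := fun t ht => by
    have := (hφ.differentiableAt (isOpen_ball.mem_nhds (hmem t ht))).hasDerivAt.scomp t
      Complex.ofRealCLM.hasDerivAt
    simpa [Function.comp_def] using this.sub_const (φ 0)
  have hB : ∀ t ∈ Set.Ico 0 r,
      HasDerivWithinAt (fun t => -(3 * M) * Real.log (1 - t)) (3 * M / (1 - t)) (Set.Ici t) t :=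
    fun t ht => by
      have h1t : 1 - t ≠ 0 := by linarith [ht.2]
      have := (((hasDerivAt_id' t).const_sub 1).log h1t).const_mul (-(3 * M))
      exact (this.congr_deriv (by field_simp)).hasDerivWithinAt
  have hbound := image_norm_le_of_norm_deriv_right_le_deriv_boundary'
    (B := fun t => -(3 * M) * Real.log (1 - t))
    (fun t ht => (hφt t ht).continuousAt.continuousWithinAt)
    (fun t ht => (hφt t (Set.Ico_subset_Icc_self ht)).hasDerivWithinAt) (by simp)
    (fun t ht => (continuousAt_const.mul ((continuous_const.sub continuous_id).continuousAt.log
      (by show (1 : ℝ) - t ≠ 0; linarith [ht.2]))).continuousWithinAt)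
    hB (fun t ht => norm_deriv_ofReal_le_div_one_sub hφ hM ht.1 (by linarith [ht.2]))
    (Set.right_mem_Icc.2 hr0)
  refine hbound.trans ?_
  rw [neg_mul, ← mul_neg, ← Real.log_inv]
  gcongr
  rw [inv_eq_one_div, div_le_div_iff₀ (by linarith) (by nlinarith)]
  nlinarith

end LogGrowth

section LogGrowthSeveral
variable {E F : Type*} [NormedAddCommGroup E] [NormedSpace ℂ E]
  [NormedAddCommGroup F] [NormedSpace ℂ F] [CompleteSpace F]

theorem norm_sub_le_mul_log_of_fderiv_apply_self_le {u : E → F}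
    (hu : DifferentiableOn ℂ u (ball 0 1)) {M : ℝ}
    (hM : ∀ w ∈ ball (0 : E) 1, (1 - ‖w‖ ^ 2) * ‖fderiv ℂ u w w‖ ≤ M) {z : E}
    (hz : z ∈ ball (0 : E) 1) : ‖u z - u 0‖ ≤ 3 * M * Real.log (2 / (1 - ‖z‖ ^ 2)) := by
  rcases eq_or_ne z 0 with rfl | hz0
  · have hM0 : 0 ≤ M := by simpa using hM 0 (mem_ball_self one_pos)
    simp only [sub_self, norm_zero]
    exact mul_nonneg (by positivity) (Real.log_nonneg (by norm_num))
  set ζ := (‖z‖⁻¹ : ℂ) • z with hζ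
  have hnorm : ∀ c : ℂ, ‖c • ζ‖ = ‖c‖ := fun c => by
    rw [hζ, smul_smul, norm_smul, norm_mul, norm_inv, Complex.norm_real, norm_norm,
      inv_mul_cancel_right₀ (norm_ne_zero_iff.2 hz0)]
  have hmem : ∀ c ∈ ball (0 : ℂ) 1, c • ζ ∈ ball (0 : E) 1 := fun c hc => by
    rwa [mem_ball_zero_iff, hnorm, ← mem_ball_zero_iff]
  have hderiv : ∀ c ∈ ball (0 : ℂ) 1,
      HasDerivAt (fun c : ℂ => u (c • ζ)) (fderiv ℂ u (c • ζ) ζ) c := fun c hc => by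
    have hd : HasFDerivAt u (fderiv ℂ u (c • ζ)) (0 + c • ζ) := by
      simpa using (hu.differentiableAt (isOpen_ball.mem_nhds (hmem c hc))).hasFDerivAt
    simpa using hd.hasDerivAt_add_smul
  have hφ : DifferentiableOn ℂ (fun c : ℂ => u (c • ζ)) (ball 0 1) := fun c hc =>
    (hderiv c hc).differentiableAt.differentiableWithinAt
  have key := norm_sub_le_mul_log_of_smul_deriv_le hφ (M := M) (fun c hc => by
    rw [(hderiv c hc).deriv, ← map_smul, ← hnorm c]
    exact hM _ (hmem c hc)) (norm_nonneg z) (mem_ball_zero_iff.1 hz)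
  rwa [zero_smul, hζ, smul_smul, ← Complex.ofReal_inv, ← Complex.ofReal_mul,
    mul_inv_cancel₀ (norm_ne_zero_iff.2 hz0), Complex.ofReal_one, one_smul] at key

end LogGrowthSeveral

section Zygmund
variable {n : ℕ}

theorem rad_apply (f : E n → ℂ) (z : E n) : rad n f z = fderiv ℂ f z z := by
  have h := congrArg (fderiv ℂ f z) ((EuclideanSpace.basisFun (Fin n) ℂ).sum_repr z)
  simpa [rad] using h

theorem rad_zero (f : E n → ℂ) : rad n f 0 = 0 := by
  simp [rad_apply]

theorem zero_mem_uball : (0 : E n) ∈ uball n :=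
  mem_ball_self one_pos

theorem DifferentiableOn.rad {f : E n → ℂ} {U : Set (E n)} (hU : IsOpen U)
    (hf : DifferentiableOn ℂ f U) : DifferentiableOn ℂ (rad n f) U :=
  DifferentiableOn.fun_sum fun j _ => (EuclideanSpace.proj j).differentiable.differentiableOn.mul
    (hf.differentiableOn_fderiv_apply hU _)

theorem rad_Ig {f g : E n → ℂ} (hf : DifferentiableOn ℂ f (uball n))
    (hg : DifferentiableOn ℂ g (uball n)) {z : E n} (hz : z ∈ uball n) :
    rad n (Ig n g f) z = rad n f z * g z := by
  rw [rad_apply]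
  exact fderiv_integral_comp_smul_div_apply_self (h := fun w => rad n f w * g w)
    ((hf.rad isOpen_ball).mul hg) (by simp [rad_zero]) hz

theorem rad_rad_Ig {f g : E n → ℂ} (hf : DifferentiableOn ℂ f (uball n))
    (hg : DifferentiableOn ℂ g (uball n)) {z : E n} (hz : z ∈ uball n) :
    rad n (rad n (Ig n g f)) z = rad n (rad n f) z * g z + rad n f z * rad n g z := by
  have hU : uball n ∈ 𝓝 z := isOpen_ball.mem_nhds hz
  have hEq : rad n (Ig n g f) =ᶠ[𝓝 z] fun w => rad n f w * g w :=
    Filter.eventually_of_mem hU fun w hw => rad_Ig hf hg hw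
  rw [rad_apply, hEq.fderiv_eq, fderiv_fun_mul ((hf.rad isOpen_ball).differentiableAt hU)
    (hg.differentiableAt hU), rad_apply (rad n f), rad_apply g]
  simp only [add_apply, smul_apply, smul_eq_mul]
  ring

theorem Ig_zero (f g : E n → ℂ) : Ig n g f 0 = 0 := by
  simp [Ig, rad_zero]

theorem norm_rad_rad_Ig_le {f g : E n → ℂ} (hf : DifferentiableOn ℂ f (uball n))
    (hg : DifferentiableOn ℂ g (uball n)) {M K₁ K₂ : ℝ}
    (hfM : ∀ w ∈ uball n, (1 - ‖w‖ ^ 2) * ‖rad n (rad n f) w‖ ≤ M)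
    (hK₁ : ∀ w ∈ uball n, ‖g w‖ ≤ K₁)
    (hK₂ : ∀ w ∈ uball n, (1 - ‖w‖ ^ 2) * ‖rad n g w‖ * Real.log (2 / (1 - ‖w‖ ^ 2)) ≤ K₂)
    {z : E n} (hz : z ∈ uball n) :
    (1 - ‖z‖ ^ 2) * ‖rad n (rad n (Ig n g f)) z‖ ≤ (K₁ + 3 * K₂) * M := by
  have hM0 : 0 ≤ M := by simpa [rad_zero] using hfM 0 zero_mem_uball
  have hd : 0 < 1 - ‖z‖ ^ 2 := by
    have := mem_ball_zero_iff.1 hz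
    nlinarith [norm_nonneg z]
  have hRf : ‖rad n f z‖ ≤ 3 * M * Real.log (2 / (1 - ‖z‖ ^ 2)) := by
    simpa [rad_zero] using norm_sub_le_mul_log_of_fderiv_apply_self_le (hf.rad isOpen_ball)
      (fun w hw => by rw [← rad_apply]; exact hfM w hw) hz
  rw [rad_rad_Ig hf hg hz]
  calc (1 - ‖z‖ ^ 2) * ‖rad n (rad n f) z * g z + rad n f z * rad n g z‖
      ≤ (1 - ‖z‖ ^ 2) * ‖rad n (rad n f) z‖ * ‖g z‖
        + ‖rad n f z‖ * ((1 - ‖z‖ ^ 2) * ‖rad n g z‖) := by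
        rw [mul_assoc, mul_left_comm ‖rad n f z‖, ← mul_add, ← norm_mul, ← norm_mul]
        exact mul_le_mul_of_nonneg_left (norm_add_le _ _) hd.le
    _ ≤ M * K₁ + 3 * M * ((1 - ‖z‖ ^ 2) * ‖rad n g z‖ * Real.log (2 / (1 - ‖z‖ ^ 2))) := by
        rw [show 3 * M * ((1 - ‖z‖ ^ 2) * ‖rad n g z‖ * Real.log (2 / (1 - ‖z‖ ^ 2)))
          = 3 * M * Real.log (2 / (1 - ‖z‖ ^ 2)) * ((1 - ‖z‖ ^ 2) * ‖rad n g z‖) by ring]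
        gcongr
        · exact hfM z hz
        · exact hK₁ z hz
    _ ≤ (K₁ + 3 * K₂) * M := by nlinarith [hK₂ z hz]

theorem zero_mem_zygSet (f : E n → ℂ) : (0 : ℝ) ∈ zygSet n f :=
  ⟨0, zero_mem_uball, by simp [rad_zero]⟩

theorem le_sSup_zygSet {f : E n → ℂ} (hf : memZ n f) {z : E n} (hz : z ∈ uball n) :
    (1 - ‖z‖ ^ 2) * ‖rad n (rad n f) z‖ ≤ sSup (zygSet n f) :=
  le_csSup hf ⟨z, hz, rfl⟩

theorem memZ_and_zygNorm_le {f : E n → ℂ} {A : ℝ}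
    (hA : ∀ z ∈ uball n, (1 - ‖z‖ ^ 2) * ‖rad n (rad n f) z‖ ≤ A) :
    memZ n f ∧ zygNorm n f ≤ ‖f 0‖ + A := by
  have hle : ∀ x ∈ zygSet n f, x ≤ A := by
    rintro x ⟨z, hz, rfl⟩
    exact hA z hz
  exact ⟨⟨A, hle⟩, add_le_add le_rfl (csSup_le ⟨0, zero_mem_zygSet f⟩ hle)⟩

end Zygmund

theorem Ig_bounded_of_bounded_and_Blog_general (n : ℕ) (g : E n → ℂ)
    (hg : DifferentiableOn ℂ g (uball n))
    (hbd : ∃ K : ℝ, ∀ z ∈ uball n, ‖g z‖ ≤ K)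
    (hlog : ∃ K : ℝ, ∀ z ∈ uball n,
      (1 - ‖z‖ ^ 2) * ‖rad n g z‖ * Real.log (2 / (1 - ‖z‖ ^ 2)) ≤ K) :
    ∃ C > (0:ℝ), ∀ f : E n → ℂ, DifferentiableOn ℂ f (uball n) → memZ n f →
      memZ n (Ig n g f) ∧ zygNorm n (Ig n g f) ≤ C * zygNorm n f := by
  obtain ⟨K₁, hK₁⟩ := hbd
  obtain ⟨K₂, hK₂⟩ := hlog
  have hK₁0 : 0 ≤ K₁ := (norm_nonneg _).trans (hK₁ 0 zero_mem_uball)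
  have hK₂0 : 0 ≤ K₂ := by simpa [rad_zero] using hK₂ 0 zero_mem_uball
  refine ⟨K₁ + 3 * K₂ + 1, by positivity, fun f hf hfZ => ?_⟩
  have hM0 : 0 ≤ sSup (zygSet n f) := le_csSup hfZ (zero_mem_zygSet f)
  obtain ⟨hZ, hnorm⟩ := memZ_and_zygNorm_le fun z hz =>
    norm_rad_rad_Ig_le hf hg (fun w hw => le_sSup_zygSet hfZ hw) hK₁ hK₂ hz
  refine ⟨hZ, hnorm.trans ?_⟩
  rw [Ig_zero, norm_zero, zero_add, zygNorm]
  nlinarith [norm_nonneg (f 0)]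

/-- **Theorem 2 (sufficiency).** If `g ∈ H^∞ ∩ ℬ_log`, then `I_g` is bounded on the
Zygmund space. -/
theorem Ig_bounded_of_bounded_and_Blog (n : ℕ) (hn : 1 ≤ n) (g : E n → ℂ)
    (hg : DifferentiableOn ℂ g (uball n))
    (hbd : ∃ K : ℝ, ∀ z ∈ uball n, ‖g z‖ ≤ K)
    (hlog : ∃ K : ℝ, ∀ z ∈ uball n,
      (1 - ‖z‖ ^ 2) * ‖rad n g z‖ * Real.log (2 / (1 - ‖z‖ ^ 2)) ≤ K) :
    ∃ C > (0:ℝ), ∀ f : E n → ℂ, DifferentiableOn ℂ f (uball n) → memZ n f →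
      memZ n (Ig n g f) ∧ zygNorm n (Ig n g f) ≤ C * zygNorm n f :=
  Ig_bounded_of_bounded_and_Blog_general n g hg hbd hlog
end
end

section
/- Let n ≥ 1 and β > 0. There exists a constant C > 0 such that for all z, w in the open unit ball B of ℂⁿ, the kernel L(z,w) = ∫₀¹ ((1 − t⟨z,w⟩)^{−(n+1+β)} − 1)·dt/t satisfies |L(z,w)| ≤ C/|1 − ⟨z,w⟩|^{n+β}, where ⟨z,w⟩ = Σ_{j=1}^n z_j·conj(w_j) is the Hermitian inner product and powers are taken with the principal branch (note Re(1 − t⟨z,w⟩) > 0 for 0 ≤ t ≤ 1 and z, w ∈ B). -/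
/-!
Write `x = |1 - a|` with `|a| ≤ 1`, `a ≠ 1`. Along the segment, `|1 - ta| ≥ 1 - t` and
`2|1 - ta| ≥ x`, hence `|1 - ta| ≥ (1 - t + x)/3`. For `t ≤ 1/2` the integrand
`((1 - ta)^{-S} - 1)/t` is bounded by the mean value theorem, since `(1 - b)^{-S}` has bounded
derivative on `|b| ≤ 1/2`; for `t ≥ 1/2` it is at most `2(3^S (1 - t + x)^{-S} + 1)`. As
`∫₀¹ (1 - t + x)^{-S} dt ≤ x^{1-S}/(S - 1)` for `S > 1`, the integral is `O(x^{1-S})`.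
The kernel estimate is the case `S = n + 1 + β`, `a = ⟨z, w⟩`.
-/

open MeasureTheory Metric Filter

noncomputable section

/-- The Hermitian pairing `⟨z,w⟩ = ∑ z_j conj(w_j)`. -/
def hip (n : ℕ) (z w : E n) : ℂ := ∑ j : Fin n, z j * (starRingEnd ℂ) (w j)

lemma one_sub_le_norm_one_sub_ofReal_mul {a : ℂ} (ha : ‖a‖ ≤ 1) {t : ℝ} (ht : 0 ≤ t) :
    1 - t ≤ ‖1 - (t : ℂ) * a‖ := by
  have hta : ‖(t : ℂ) * a‖ ≤ t := by
    rw [norm_mul, Complex.norm_of_nonneg ht]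
    exact mul_le_of_le_one_right ht ha
  have := norm_sub_norm_le (1 : ℂ) ((t : ℂ) * a)
  rw [norm_one] at this
  linarith

lemma norm_one_sub_le_two_mul_norm_one_sub_ofReal_mul {a : ℂ} (ha : ‖a‖ ≤ 1) {t : ℝ}
    (ht₀ : 0 ≤ t) (ht₁ : t ≤ 1) : ‖1 - a‖ ≤ 2 * ‖1 - (t : ℂ) * a‖ := by
  have hsplit : 1 - a = (1 - (t : ℂ) * a) - ((1 - t : ℝ) : ℂ) * a := by push_cast; ring
  have htail : ‖((1 - t : ℝ) : ℂ) * a‖ ≤ 1 - t := by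
    rw [norm_mul, Complex.norm_of_nonneg (by linarith)]
    exact mul_le_of_le_one_right (by linarith) ha
  have := norm_sub_le (1 - (t : ℂ) * a) (((1 - t : ℝ) : ℂ) * a)
  have := one_sub_le_norm_one_sub_ofReal_mul ha ht₀
  rw [hsplit]
  linarith

lemma one_sub_add_norm_one_sub_le_three_mul {a : ℂ} (ha : ‖a‖ ≤ 1) {t : ℝ}
    (ht₀ : 0 ≤ t) (ht₁ : t ≤ 1) : 1 - t + ‖1 - a‖ ≤ 3 * ‖1 - (t : ℂ) * a‖ := by
  have := one_sub_le_norm_one_sub_ofReal_mul ha ht₀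
  have := norm_one_sub_le_two_mul_norm_one_sub_ofReal_mul ha ht₀ ht₁
  linarith

lemma norm_one_sub_cpow_neg_sub_one_le {S : ℝ} (hS : 0 ≤ S) {b : ℂ} (hb : ‖b‖ ≤ 1 / 2) :
    ‖(1 - b) ^ (-(S : ℂ)) - 1‖ ≤ S * 2 ^ (S + 1) * ‖b‖ := by
  have hfar : ∀ w ∈ closedBall (0 : ℂ) (1 / 2), 1 / 2 ≤ ‖1 - w‖ := fun w hw => by
    have := norm_sub_norm_le (1 : ℂ) w
    rw [norm_one] at this
    rw [mem_closedBall_zero_iff] at hw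
    linarith
  have hderiv : ∀ w ∈ closedBall (0 : ℂ) (1 / 2), HasDerivWithinAt (fun w => (1 - w) ^ (-(S : ℂ)))
      (-(S : ℂ) * (1 - w) ^ (-(S : ℂ) - 1) * -1) (closedBall 0 (1 / 2)) w := by
    intro w hw
    refine (((hasDerivAt_id w).const_sub 1).cpow_const (Or.inl ?_)).hasDerivWithinAt
    have := (Complex.abs_re_le_norm w).trans (mem_closedBall_zero_iff.1 hw)
    simp only [Complex.sub_re, Complex.one_re, id]
    linarith [le_abs_self w.re]
  have hbound : ∀ w ∈ closedBall (0 : ℂ) (1 / 2),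
      ‖-(S : ℂ) * (1 - w) ^ (-(S : ℂ) - 1) * -1‖ ≤ S * 2 ^ (S + 1) := by
    intro w hw
    have hpow : ‖1 - w‖ ^ (-S - 1) ≤ (1 / 2 : ℝ) ^ (-S - 1) :=
      Real.rpow_le_rpow_of_nonpos (by norm_num) (hfar w hw) (by linarith)
    have htwo : (1 / 2 : ℝ) ^ (-S - 1) = 2 ^ (S + 1) := by
      rw [one_div, Real.inv_rpow zero_le_two, ← Real.rpow_neg zero_le_two, neg_sub, sub_neg_eq_add,
        add_comm]
    have hexp : -(S : ℂ) - 1 = ((-S - 1 : ℝ) : ℂ) := by push_cast; ring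
    rw [norm_mul, norm_mul, norm_neg, norm_neg, norm_one, mul_one, Complex.norm_real,
      Real.norm_of_nonneg hS, hexp, Complex.norm_cpow_real]
    exact mul_le_mul_of_nonneg_left (hpow.trans htwo.le) hS
  have := (convex_closedBall (0 : ℂ) (1 / 2)).norm_image_sub_le_of_norm_hasDerivWithin_le
    hderiv hbound (mem_closedBall_self (by norm_num)) (mem_closedBall_zero_iff.2 hb)
  simpa using this

def kernelMajorant (S x t : ℝ) : ℝ := S * 2 ^ (S + 1) + 2 + 2 * 3 ^ S * (1 - t + x) ^ (-S)

lemma norm_cpow_neg_sub_one_div_le_kernelMajorant {S : ℝ} (hS : 0 ≤ S) {a : ℂ} (ha : ‖a‖ ≤ 1)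
    (ha₁ : a ≠ 1) {t : ℝ} (ht₀ : 0 < t) (ht₁ : t ≤ 1) :
    ‖((1 - (t : ℂ) * a) ^ (-(S : ℂ)) - 1) / (t : ℂ)‖ ≤ kernelMajorant S ‖1 - a‖ t := by
  have hx : 0 < ‖1 - a‖ := norm_pos_iff.2 (sub_ne_zero.2 ha₁.symm)
  have hbase : 0 < 1 - t + ‖1 - a‖ := by linarith
  have htail : 0 ≤ 2 * 3 ^ S * (1 - t + ‖1 - a‖) ^ (-S) := by positivity
  rw [norm_div, Complex.norm_of_nonneg ht₀.le, kernelMajorant]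
  rcases le_or_gt t (1 / 2) with hsmall | hlarge
  · have hta : ‖(t : ℂ) * a‖ ≤ t := by
      rw [norm_mul, Complex.norm_of_nonneg ht₀.le]
      exact mul_le_of_le_one_right ht₀.le ha
    rw [div_le_iff₀ ht₀]
    calc _ ≤ S * 2 ^ (S + 1) * ‖(t : ℂ) * a‖ :=
          norm_one_sub_cpow_neg_sub_one_le hS (hta.trans hsmall)
      _ ≤ S * 2 ^ (S + 1) * t := by gcongr
      _ ≤ _ := by gcongr; linarith
  · have hpow : ‖(1 - (t : ℂ) * a) ^ (-(S : ℂ))‖ ≤ 3 ^ S * (1 - t + ‖1 - a‖) ^ (-S) := by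
      have hlow := one_sub_add_norm_one_sub_le_three_mul ha ht₀.le ht₁
      rw [← Complex.ofReal_neg, Complex.norm_cpow_real]
      calc ‖1 - (t : ℂ) * a‖ ^ (-S) ≤ ((1 - t + ‖1 - a‖) / 3) ^ (-S) :=
            Real.rpow_le_rpow_of_nonpos (by positivity) (by linarith) (by linarith)
        _ = 3 ^ S * (1 - t + ‖1 - a‖) ^ (-S) := by
            rw [Real.div_rpow hbase.le (by norm_num), Real.rpow_neg (by norm_num : (0 : ℝ) ≤ 3),
              div_inv_eq_mul, mul_comm]
    have hnum : ‖(1 - (t : ℂ) * a) ^ (-(S : ℂ)) - 1‖ ≤ 3 ^ S * (1 - t + ‖1 - a‖) ^ (-S) + 1 := by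
      have := norm_sub_le ((1 - (t : ℂ) * a) ^ (-(S : ℂ))) 1
      rw [norm_one] at this
      linarith
    rw [div_le_iff₀ ht₀]
    nlinarith [norm_nonneg ((1 - (t : ℂ) * a) ^ (-(S : ℂ)) - 1),
      (by positivity : (0 : ℝ) ≤ S * 2 ^ (S + 1))]

lemma intervalIntegrable_one_sub_add_rpow {x : ℝ} (hx : 0 < x) (r : ℝ) :
    IntervalIntegrable (fun t => (1 - t + x) ^ r) volume 0 1 := by
  refine ContinuousOn.intervalIntegrable (ContinuousOn.rpow_const (by fun_prop) fun t ht => ?_)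
  rw [Set.uIcc_of_le zero_le_one] at ht
  exact Or.inl (by linarith [ht.2])

lemma integral_one_sub_add_rpow_neg_le {S : ℝ} (hS : 1 < S) {x : ℝ} (hx : 0 < x) :
    ∫ t in (0 : ℝ)..1, (1 - t + x) ^ (-S) ≤ x ^ (1 - S) / (S - 1) := by
  have hsubst : ∫ t in (0 : ℝ)..1, (1 - t + x) ^ (-S) = ∫ u in x..1 + x, u ^ (-S) := by
    simpa [sub_add_eq_add_sub] using
      intervalIntegral.integral_comp_sub_left (a := 0) (b := 1) (fun u : ℝ => u ^ (-S)) (1 + x)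
  have hzero : (0 : ℝ) ∉ Set.uIcc x (1 + x) := by
    rw [Set.uIcc_of_le (by linarith)]
    exact fun h => by linarith [h.1]
  rw [hsubst, integral_rpow (Or.inr ⟨by linarith, hzero⟩), show -S + 1 = -(S - 1) by ring,
    div_neg, ← neg_div, neg_sub, show 1 - S = -(S - 1) by ring]
  gcongr
  exact sub_le_self _ (Real.rpow_nonneg (by linarith) _)

lemma exists_norm_integral_cpow_neg_sub_one_div_le {S : ℝ} (hS : 1 < S) :
    ∃ C > (0 : ℝ), ∀ a : ℂ, ‖a‖ ≤ 1 → a ≠ 1 →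
      ‖∫ t in (0 : ℝ)..1, ((1 - (t : ℂ) * a) ^ (-(S : ℂ)) - 1) / (t : ℂ)‖ ≤
        C / ‖1 - a‖ ^ (S - 1) := by
  set A : ℝ := S * 2 ^ (S + 1) + 2
  set B : ℝ := 2 * 3 ^ S
  have hA : 0 < A := by positivity
  have hS₁ : 0 < S - 1 := by linarith
  refine ⟨A * 2 ^ (S - 1) + B / (S - 1), by positivity, fun a ha ha₁ => ?_⟩
  set x := ‖1 - a‖
  have hx : 0 < x := norm_pos_iff.2 (sub_ne_zero.2 ha₁.symm)
  have hx₂ : x ≤ 2 := (norm_sub_le _ _).trans (by rw [norm_one]; linarith)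
  have hmajorant : IntervalIntegrable (kernelMajorant S x) volume 0 1 :=
    intervalIntegrable_const.add ((intervalIntegrable_one_sub_add_rpow hx _).const_mul B)
  have hconst : A ≤ A * 2 ^ (S - 1) / x ^ (S - 1) := by
    rw [mul_div_assoc, ← Real.div_rpow zero_le_two hx.le]
    exact le_mul_of_one_le_right hA.le
      (Real.one_le_rpow ((one_le_div hx).2 hx₂) (by linarith))
  have hpow : x ^ (1 - S) = 1 / x ^ (S - 1) := by
    rw [one_div, ← Real.rpow_neg hx.le, neg_sub]
  calc _ ≤ ∫ t in (0 : ℝ)..1, kernelMajorant S x t :=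
        intervalIntegral.norm_integral_le_of_norm_le zero_le_one
          (Eventually.of_forall fun t ht =>
            norm_cpow_neg_sub_one_div_le_kernelMajorant (by linarith) ha ha₁ ht.1 ht.2) hmajorant
    _ = A + B * ∫ t in (0 : ℝ)..1, (1 - t + x) ^ (-S) := by
        simp only [kernelMajorant]
        rw [intervalIntegral.integral_add intervalIntegrable_const
          ((intervalIntegrable_one_sub_add_rpow hx _).const_mul B),
          intervalIntegral.integral_const_mul]
        simp [A]
    _ ≤ A * 2 ^ (S - 1) / x ^ (S - 1) + B * (x ^ (1 - S) / (S - 1)) :=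
        add_le_add hconst (mul_le_mul_of_nonneg_left (integral_one_sub_add_rpow_neg_le hS hx)
          (by positivity))
    _ = (A * 2 ^ (S - 1) + B / (S - 1)) / x ^ (S - 1) := by rw [hpow]; ring

lemma norm_hip_lt_one {n : ℕ} {z w : E n} (hz : z ∈ uball n) (hw : w ∈ uball n) :
    ‖hip n z w‖ < 1 := by
  rw [uball, mem_ball_zero_iff] at hz hw
  have hinner : hip n z w = inner ℂ w z := by
    simp only [hip, PiLp.inner_apply, RCLike.inner_apply]
  rw [hinner]
  calc ‖inner ℂ w z‖ ≤ ‖w‖ * ‖z‖ := norm_inner_le_norm w z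
    _ < 1 := mul_lt_one_of_nonneg_of_lt_one_left (norm_nonneg w) hw hz.le

theorem kernel_estimate_general (n : ℕ) (β : ℝ) (hβ : 0 < β) :
    ∃ C > (0:ℝ), ∀ z ∈ uball n, ∀ w ∈ uball n,
      ‖∫ t in (0:ℝ)..1,
          ((1 - (t : ℂ) * hip n z w) ^ (-((n : ℂ) + 1 + (β : ℂ))) - 1) / (t : ℂ)‖ ≤
        C / ‖1 - hip n z w‖ ^ ((n : ℝ) + β) := by
  obtain ⟨C, hC, hbound⟩ := exists_norm_integral_cpow_neg_sub_one_div_le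
    (S := n + 1 + β) (by linarith [n.cast_nonneg (α := ℝ)])
  refine ⟨C, hC, fun z hz w hw => ?_⟩
  have ha := norm_hip_lt_one hz hw
  have ha₁ : hip n z w ≠ 1 := fun h => by simp [h] at ha
  have hexp : (n : ℝ) + 1 + β - 1 = n + β := by ring
  simpa [hexp] using hbound (hip n z w) ha.le ha₁

/-- **Kernel estimate.** `|L(z,w)| ≤ C / |1-⟨z,w⟩|^{n+β}` where
`L(z,w) = ∫₀¹ ((1-t⟨z,w⟩)^{-(n+1+β)} - 1) dt/t`. -/
theorem kernel_estimate (n : ℕ) (hn : 1 ≤ n) (β : ℝ) (hβ : 0 < β) :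
    ∃ C > (0:ℝ), ∀ z ∈ uball n, ∀ w ∈ uball n,
      ‖∫ t in (0:ℝ)..1,
          ((1 - (t : ℂ) * hip n z w) ^ (-((n : ℂ) + 1 + (β : ℂ))) - 1) / (t : ℂ)‖ ≤
        C / ‖1 - hip n z w‖ ^ ((n : ℝ) + β) :=
  kernel_estimate_general n β hβ
end
end
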